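/- Let X ⊂ P^d (d ≥ 2) be the degree-d rational normal curve, and let q ∈ P^d \ X have X-rank equal to d/2 + 1 with d even (so r_X(q) equals the border rank). If S and S' are two distinct subsets of X of cardinality d/2 + 1 whose spans contain q, then ⟨S⟩ ∩ ⟨S'⟩ = {q}; in particular S ∩ S' = ∅. -/

import Mathlib

open scoped LinearAlgebra.Projectivization
open Projectivization

noncomputable section

variable {k : Type} [Field k]

/-- Projective space of the vector space of functions `ι → k`. -/
abbrev PJ (k : Type) [Field k] (ι : Type) := ℙ k (ι → k)

/-- Projective `r`-space `ℙ^r` over `k`. -/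
abbrev PP (k : Type) [Field k] (r : ℕ) := PJ k (Fin (r + 1))

/-- The (projective) linear span of a set of points of projective space. -/
def pspan {ι : Type} (S : Set (PJ k ι)) : Set (PJ k ι) :=
  {p | p.rep ∈ Submodule.span k (Projectivization.rep '' S)}

/-- The `X`-rank of a point `q`: minimal cardinality of a finite subset of `X`
whose linear span contains `q`. -/
def xrank {ι : Type} (X : Set (PJ k ι)) (q : PJ k ι) : ℕ :=
  sInf {n | ∃ S : Finset (PJ k ι), ↑S ⊆ X ∧ S.card = n ∧ q ∈ pspan (↑S : Set (PJ k ι))}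

/-- `𝒮(X,q)`: the set of rank-evincing subsets of `X` for `q`. -/
def rankSets {ι : Type} (X : Set (PJ k ι)) (q : PJ k ι) : Set (Finset (PJ k ι)) :=
  {S | ↑S ⊆ X ∧ S.card = xrank X q ∧ q ∈ pspan (↑S : Set (PJ k ι))}

/-- `W_q := ⋂_{S ∈ 𝒮(X,q)} ⟨S⟩`, the non-uniqueness set of `q`. -/
def Wset {ι : Type} (X : Set (PJ k ι)) (q : PJ k ι) : Set (PJ k ι) :=
  ⋂ S ∈ rankSets X q, pspan (↑S : Set (PJ k ι))

/-- `S` irredundantly spans `q`. -/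
def IrrSpans {ι : Type} (q : PJ k ι) (S : Finset (PJ k ι)) : Prop :=
  q ∈ pspan (↑S : Set (PJ k ι)) ∧ ∀ S' : Finset (PJ k ι), S' ⊂ S → q ∉ pspan (↑S' : Set (PJ k ι))

/-- `𝒮(X,q,t)`: cardinality-`t` subsets of `X` irredundantly spanning `q`. -/
def irrSets {ι : Type} (X : Set (PJ k ι)) (q : PJ k ι) (t : ℕ) : Set (Finset (PJ k ι)) :=
  {S | ↑S ⊆ X ∧ S.card = t ∧ IrrSpans q S}

/-- `W_{q,t} := ⋂_{S ∈ 𝒮(X,q,t)} ⟨S⟩` (equal to the whole space when `𝒮(X,q,t) = ∅`). -/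
def WsetT {ι : Type} (X : Set (PJ k ι)) (q : PJ k ι) (t : ℕ) : Set (PJ k ι) :=
  ⋂ S ∈ irrSets X q t, pspan (↑S : Set (PJ k ι))

/-- Common zero locus in projective space of a set of (homogeneous) polynomials. -/
def zLocus {ι : Type} (T : Set (MvPolynomial ι k)) : Set (PJ k ι) :=
  {p | ∀ f ∈ T, MvPolynomial.eval p.rep f = 0}

/-- Zariski-closed subsets of projective space. -/
def ZClosed {ι : Type} (C : Set (PJ k ι)) : Prop :=
  ∃ T : Set (MvPolynomial ι k), (∀ f ∈ T, ∃ n, f.IsHomogeneous n) ∧ C = zLocus T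

/-- Zariski-open subsets of projective space. -/
def ZOpen {ι : Type} (U : Set (PJ k ι)) : Prop := ZClosed Uᶜ

/-- Irreducibility of a set for the Zariski topology. -/
def ZIrred {ι : Type} (C : Set (PJ k ι)) : Prop :=
  C.Nonempty ∧ ∀ C₁ C₂ : Set (PJ k ι), ZClosed C₁ → ZClosed C₂ → C ⊆ C₁ ∪ C₂ →
    C ⊆ C₁ ∨ C ⊆ C₂

/-- An integral (i.e. reduced and irreducible, here: irreducible closed) subvariety. -/
def IsVariety {ι : Type} (X : Set (PJ k ι)) : Prop := ZClosed X ∧ ZIrred X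

/-- Non-degenerate: not contained in any hyperplane. -/
def Nondeg {ι : Type} (X : Set (PJ k ι)) : Prop := pspan X = Set.univ

/-- Zariski closure. -/
def zClosure {ι : Type} (S : Set (PJ k ι)) : Set (PJ k ι) :=
  ⋂₀ {C | ZClosed C ∧ S ⊆ C}

/-- The `b`-th secant variety of `X`. -/
def secantVar {ι : Type} (X : Set (PJ k ι)) (b : ℕ) : Set (PJ k ι) :=
  zClosure (⋃ S ∈ {S : Finset (PJ k ι) | ↑S ⊆ X ∧ S.card = b}, pspan (↑S : Set (PJ k ι)))

/-- The border `X`-rank of `q`. -/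
def borderRank {ι : Type} (X : Set (PJ k ι)) (q : PJ k ι) : ℕ :=
  sInf {b | 0 < b ∧ q ∈ secantVar X b}

/-- Dimension of a set: sup of lengths of chains of irreducible closed subsets. -/
def varDim {ι : Type} (X : Set (PJ k ι)) : ℕ :=
  sSup {n | ∃ c : Fin (n + 1) → Set (PJ k ι), StrictMono c ∧
    (∀ i, ZClosed (c i) ∧ ZIrred (c i)) ∧ ∀ i, c i ⊆ X}

/-- The vector-space dimension of the linear span of a set of projective points
(the projective dimension is this number minus `1`). -/
def sdim {ι : Type} (T : Set (PJ k ι)) : ℕ :=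
  Module.finrank k (Submodule.span k (Projectivization.rep '' T))

/-- A projective linear subspace whose underlying linear subspace has dimension `m`. -/
def IsLinSub {ι : Type} (m : ℕ) (L : Set (PJ k ι)) : Prop :=
  ∃ W : Submodule k (ι → k), Module.finrank k W = m ∧ L = {p | p.rep ∈ W}

/-- A line in projective space. -/
def IsLine {ι : Type} (L : Set (PJ k ι)) : Prop := IsLinSub 2 L

/-- A hyperplane in `ℙ^r`. -/
def IsHyperplane {r : ℕ} (H : Set (PP k r)) : Prop := IsLinSub r H

/-- The standard vector of monomials defining the rational normal curve. -/
def rncVec (d : ℕ) (a b : k) : Fin (d + 1) → k := fun i => a ^ (d - (i : ℕ)) * b ^ (i : ℕ)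

/-- The degree-`d` rational normal curve in `ℙ^d` (image of the `d`-th Veronese of `ℙ^1`). -/
def rnc (d : ℕ) : Set (PP k d) :=
  {p | ∃ a b c : k, ¬(a = 0 ∧ b = 0) ∧ c ≠ 0 ∧ p.rep = c • rncVec d a b}

/-- The linear span of the degree-`b` zero-dimensional subscheme of the degree-`d`
rational normal curve corresponding to a nonzero binary form with coefficients `g`
(points of the span are exactly the sequences satisfying the associated linear recurrence). -/
def schemeSpan (d b : ℕ) (g : Fin (b + 1) → k) : Set (PP k d) :=
  {p | ∀ i : ℕ, ∀ _h : i + b ≤ d,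
    ∑ j : Fin (b + 1), g j * p.rep ⟨i + (j : ℕ), by have := j.isLt; omega⟩ = 0}

/-- The cactus rank of a point of `ℙ^d` with respect to the rational normal curve:
minimal degree of a zero-dimensional subscheme of the curve whose span contains `q`. -/
def cactusRank (d : ℕ) (q : PP k d) : ℕ :=
  sInf {b | ∃ g : Fin (b + 1) → k, g ≠ 0 ∧ q ∈ schemeSpan d b g}

/-- A property `P` holds for a general `m`-tuple of points of projective space:
it holds away from the zero locus of some nonzero multihomogeneous polynomial. -/
def GenlHolds {ι : Type} (m : ℕ) (P : (Fin m → PJ k ι) → Prop) : Prop :=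
  ∃ F : MvPolynomial (Fin m × ι) k, F ≠ 0 ∧
    ∀ u : Fin m → PJ k ι,
      MvPolynomial.eval (fun x => (u x.1).rep x.2) F ≠ 0 → P u

/-- A property `P` holds for a general `m`-tuple of points of `X`. -/
def GenlHoldsOn {ι : Type} (X : Set (PJ k ι)) (m : ℕ) (P : (Fin m → PJ k ι) → Prop) : Prop :=
  ∃ F : MvPolynomial (Fin m × ι) k,
    (∃ u : Fin m → PJ k ι, (∀ i, u i ∈ X) ∧
      MvPolynomial.eval (fun x => (u x.1).rep x.2) F ≠ 0) ∧
    ∀ u : Fin m → PJ k ι, (∀ i, u i ∈ X) →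
      MvPolynomial.eval (fun x => (u x.1).rep x.2) F ≠ 0 → P u

/-- Degree-`t` forms vanishing on a set of projective points. -/
def vanishSub {ι : Type} (T : Set (PJ k ι)) : Submodule k (MvPolynomial ι k) :=
  ⨅ p ∈ T, LinearMap.ker (MvPolynomial.aeval (R := k) (Projectivization.rep p)).toLinearMap

/-- `h⁰(𝓘_T(t))`: dimension of the space of degree-`t` forms vanishing on `T`. -/
def h0 {ι : Type} (t : ℕ) (T : Set (PJ k ι)) : ℕ :=
  Module.finrank k ↥(MvPolynomial.homogeneousSubmodule ι k t ⊓ vanishSub T)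

/-- `h¹(𝓘_S(d))` for a finite set of points `S`: the failure of `S` to impose
independent conditions on degree-`d` forms. -/
def h1I {ι : Type} (S : Finset (PJ k ι)) (d : ℕ) : ℕ :=
  S.card - (Module.finrank k ↥(MvPolynomial.homogeneousSubmodule ι k d) - h0 d (↑S : Set (PJ k ι)))

/-- Index type for the coordinates of the degree-`d` Veronese embedding of `ℙ^n`:
exponent vectors of total degree `d` (there are `(n+d choose n)` of them). -/
def ExpIdx (n d : ℕ) : Type := {m : Fin (n + 1) → ℕ // ∑ i, m i = d}

/-- The vector of all degree-`d` monomials evaluated at `u`. -/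
def verVec (n d : ℕ) (u : Fin (n + 1) → k) : ExpIdx n d → k := fun m => ∏ i, u i ^ m.1 i

lemma verVec_ne_zero {n d : ℕ} {u : Fin (n + 1) → k} (hu : u ≠ 0) :
    verVec (k := k) n d u ≠ 0 := by
  obtain ⟨i, hi⟩ := Function.ne_iff.mp hu
  intro h
  have hm : (∑ j, if j = i then d else 0) = d := by simp
  have h0 := congrFun h ⟨fun j => if j = i then d else 0, hm⟩
  simp only [verVec, Pi.zero_apply] at h0
  rw [Finset.prod_eq_single i (fun b _ hb => by simp [hb]) (by simp)] at h0
  simp only [if_pos rfl] at h0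
  change u i ^ d = 0 at h0
  rcases eq_or_ne d 0 with hd | hd
  · rw [hd] at h0; simp at h0
  · exact hi ((pow_eq_zero_iff hd).mp h0)

/-- The degree-`d` Veronese embedding `ν_d : ℙ^n → ℙ^r`, `r = (n+d choose n) - 1`. -/
def nud (n d : ℕ) (p : PP k n) : PJ k (ExpIdx n d) :=
  Projectivization.mk k (verVec n d p.rep) (verVec_ne_zero p.rep_nonzero)

/-!
Any `d + 1` points of the rational normal curve are linearly independent: the linear map
`v ↦ (b₀ vⱼ - a₀ vⱼ₊₁)ⱼ` kills the point `(a₀ : b₀)` of the degree-`d + 1` curve and sends every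
other point `(a : b)` to `(b₀ a - a₀ b)` times the point `(a : b)` of the degree-`d` curve, so this
follows by induction on `d`.

Let `S, S'` have `d/2 + 1` points each. If they meet, `S ∪ S'` has at most `d + 1` points, hence is
independent and `⟨S⟩ ∩ ⟨S'⟩ = ⟨S ∩ S'⟩`; this contains `q` and is spanned by fewer than `r_X(q)`
points, which is absurd. If they are disjoint, `S ∪ S'` has `d + 2` points and spans `ℙ^d`, so by
Grassmann's formula `⟨S⟩ ∩ ⟨S'⟩` is a single point, which must be `q`.
-/

lemma rncVec_ne_zero (d : ℕ) {a b : k} (hab : ¬(a = 0 ∧ b = 0)) : rncVec d a b ≠ 0 := by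
  intro h
  by_cases ha : a = 0
  · have hb := congrFun h (Fin.last d)
    simp [rncVec, ha] at hb
    exact hab ⟨ha, hb.1⟩
  · have h0 := congrFun h 0
    simp [rncVec] at h0
    exact ha h0.1

lemma rncVec_smul (d : ℕ) (l a b : k) : rncVec d (l * a) (l * b) = l ^ d • rncVec d a b := by
  funext i
  have hi : d - (i : ℕ) + i = d := Nat.sub_add_cancel (Nat.lt_succ_iff.mp i.isLt)
  have hl : l ^ d = l ^ (d - (i : ℕ)) * l ^ (i : ℕ) := by rw [← pow_add, hi]
  simp only [rncVec, Pi.smul_apply, smul_eq_mul, mul_pow, hl]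
  ring

def rncShift (d : ℕ) (a₀ b₀ : k) : (Fin (d + 2) → k) →ₗ[k] (Fin (d + 1) → k) :=
  LinearMap.pi fun j => b₀ • LinearMap.proj j.castSucc - a₀ • LinearMap.proj j.succ

lemma rncShift_rncVec (d : ℕ) (a₀ b₀ a b : k) :
    rncShift d a₀ b₀ (rncVec (d + 1) a b) = (b₀ * a - a₀ * b) • rncVec d a b := by
  funext j
  have hj : d + 1 - (j : ℕ) = d - j + 1 := by omega
  simp only [rncShift, rncVec, LinearMap.pi_apply, LinearMap.sub_apply, LinearMap.smul_apply,
    LinearMap.proj_apply, Fin.val_castSucc, Fin.val_succ, Pi.smul_apply, smul_eq_mul, hj,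
    Nat.add_sub_add_right]
  ring

theorem linearIndependent_rncVec (d : ℕ) {ι : Type*} [Fintype ι] {a b : ι → k}
    (hab : ∀ i, ¬(a i = 0 ∧ b i = 0)) (hdist : Pairwise fun i j => a i * b j ≠ a j * b i)
    (hcard : Fintype.card ι ≤ d + 1) : LinearIndependent k fun i => rncVec d (a i) (b i) := by
  induction d generalizing ι with
  | zero =>
    have : Subsingleton ι := Fintype.card_le_one_iff_subsingleton.mp hcard
    exact (linearIndependent_subsingleton_index_iff _).mpr fun i => rncVec_ne_zero 0 (hab i)
  | succ d ih =>
    classical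
    rw [Fintype.linearIndependent_iff]
    intro g hg
    suffices hrest : ∀ i₀, ∀ i ≠ i₀, g i = 0 by
      intro i₀
      rw [Finset.sum_eq_single i₀ (fun i _ hi => by rw [hrest i₀ i hi, zero_smul]) (by simp)]
        at hg
      exact (smul_eq_zero.mp hg).resolve_right (rncVec_ne_zero _ (hab i₀))
    intro i₀
    have hshift := congrArg (rncShift d (a i₀) (b i₀)) hg
    simp only [map_sum, map_smul, rncShift_rncVec, smul_smul, map_zero] at hshift
    rw [Fintype.sum_eq_add_sum_subtype_ne _ i₀, mul_comm (b i₀), sub_self, mul_zero, zero_smul,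
      zero_add] at hshift
    have hcard' : Fintype.card {i // i ≠ i₀} ≤ d + 1 := by
      rw [Fintype.card_subtype_compl, Fintype.card_subtype_eq]
      omega
    have hind := Fintype.linearIndependent_iff.mp
      (ih (a := fun i : {i // i ≠ i₀} => a i) (b := fun i => b i) (fun i => hab i)
        (fun i j hij => hdist (Subtype.coe_injective.ne hij)) hcard') _ hshift
    intro i hi
    have hfac : b i₀ * a i - a i₀ * b i ≠ 0 := by
      intro h
      apply hdist hi
      linear_combination h
    exact (mul_eq_zero.mp (hind ⟨i, hi⟩)).resolve_right hfac

lemma exists_eq_mul_of_mul_eq_mul {a b a' b' : k} (hab : ¬(a = 0 ∧ b = 0))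
    (h : a * b' = a' * b) : ∃ l, a' = l * a ∧ b' = l * b := by
  by_cases ha : a = 0
  · have hb : b ≠ 0 := fun hb => hab ⟨ha, hb⟩
    have ha' : a' = 0 := by
      rw [ha, zero_mul, eq_comm, mul_eq_zero] at h
      exact h.resolve_right hb
    exact ⟨b' / b, by rw [ha, ha', mul_zero], by field_simp⟩
  · refine ⟨a' / a, by field_simp, ?_⟩
    field_simp
    linear_combination h

lemma eq_of_rep_eq_smul_rncVec_of_mul_eq_mul {d : ℕ} {p p' : PP k d} {a b c a' b' c' : k}
    (hab : ¬(a = 0 ∧ b = 0)) (hc : c ≠ 0) (hp : p.rep = c • rncVec d a b)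
    (hp' : p'.rep = c' • rncVec d a' b') (h : a * b' = a' * b) : p' = p := by
  obtain ⟨l, rfl, rfl⟩ := exists_eq_mul_of_mul_eq_mul hab h
  rw [← mk_rep p, ← mk_rep p', mk_eq_mk_iff']
  refine ⟨c' * l ^ d / c, ?_⟩
  rw [hp, hp', rncVec_smul, smul_smul, smul_smul]
  field_simp

theorem linearIndepOn_rep_of_subset_rnc {d : ℕ} {T : Finset (PP k d)}
    (hT : ↑T ⊆ rnc (k := k) d) (hcard : T.card ≤ d + 1) :
    LinearIndepOn k Projectivization.rep (T : Set (PP k d)) := by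
  choose A B C hAB hC hrep using fun p : (T : Set (PP k d)) => hT p.2
  have hdist : Pairwise fun p p' => A p * B p' ≠ A p' * B p := fun p p' hne h => hne <|
    (Subtype.ext (eq_of_rep_eq_smul_rncVec_of_mul_eq_mul (hAB p) (hC p) (hrep p) (hrep p') h)).symm
  have hind := (linearIndependent_rncVec d hAB hdist (by simpa using hcard)).units_smul
    fun p => Units.mk0 (C p) (hC p)
  unfold LinearIndepOn
  convert hind using 1
  funext p
  simp [hrep p]

-- `p ∈ pspan S` unfolds to `p.rep ∈ repSpan S`.
def repSpan {ι : Type} (S : Set (PJ k ι)) : Submodule k (ι → k) :=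
  Submodule.span k (Projectivization.rep '' S)

lemma finrank_repSpan {ι : Type} {T : Finset (PJ k ι)}
    (hT : LinearIndepOn k Projectivization.rep (T : Set (PJ k ι))) :
    Module.finrank k (repSpan (T : Set (PJ k ι))) = T.card := by
  rw [repSpan, Set.image_eq_range, finrank_span_eq_card hT]
  simp

instance finiteDimensional_repSpan {ι : Type} (T : Finset (PJ k ι)) :
    FiniteDimensional k (repSpan (T : Set (PJ k ι))) :=
  FiniteDimensional.span_of_finite k (T.finite_toSet.image _)

lemma repSpan_union {ι : Type} [DecidableEq (PJ k ι)] (S S' : Finset (PJ k ι)) :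
    repSpan (↑(S ∪ S') : Set (PJ k ι)) = repSpan ↑S ⊔ repSpan ↑S' := by
  rw [repSpan, Finset.coe_union, Set.image_union, Submodule.span_union]
  rfl

lemma repSpan_mono {ι : Type} {S S' : Set (PJ k ι)} (h : S ⊆ S') : repSpan S ≤ repSpan S' :=
  Submodule.span_mono (Set.image_mono h)

lemma repSpan_inf_repSpan {ι : Type} [DecidableEq (PJ k ι)] {S S' : Finset (PJ k ι)}
    (h : LinearIndepOn k Projectivization.rep (↑(S ∪ S') : Set (PJ k ι))) :
    repSpan ↑S ⊓ repSpan ↑S' = repSpan (↑(S ∩ S') : Set (PJ k ι)) := by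
  have hdim := Submodule.finrank_sup_add_finrank_inf_eq (repSpan (S : Set (PJ k ι))) (repSpan S')
  rw [← repSpan_union, finrank_repSpan h,
    finrank_repSpan (h.mono (by simp)), finrank_repSpan (h.mono (by simp))] at hdim
  refine (Submodule.eq_of_le_of_finrank_eq ?_ ?_).symm
  · exact le_inf (repSpan_mono (by simp)) (repSpan_mono (by simp))
  · rw [finrank_repSpan (h.mono (Finset.coe_subset.mpr Finset.inter_subset_union))]
    have := Finset.card_union_add_card_inter S S'
    omega

lemma repSpan_eq_top_of_subset_rnc {d : ℕ} {T : Finset (PP k d)} (hT : ↑T ⊆ rnc (k := k) d)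
    (hcard : d + 1 ≤ T.card) : repSpan (T : Set (PP k d)) = ⊤ := by
  obtain ⟨T', hT'T, hT'card⟩ := Finset.exists_subset_card_eq hcard
  refine eq_top_mono (repSpan_mono (Finset.coe_subset.mpr hT'T)) ?_
  apply Submodule.eq_top_of_finrank_eq
  rw [finrank_repSpan (linearIndepOn_rep_of_subset_rnc ((Finset.coe_subset.mpr hT'T).trans hT)
    hT'card.le), hT'card, Module.finrank_fin_fun]

lemma finrank_repSpan_inf_add_of_subset_rnc {d : ℕ} [DecidableEq (PP k d)]
    {S S' : Finset (PP k d)} (hS : ↑S ⊆ rnc (k := k) d) (hS' : ↑S' ⊆ rnc (k := k) d)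
    (hcS : S.card ≤ d + 1) (hcS' : S'.card ≤ d + 1) (hunion : d + 1 ≤ (S ∪ S').card) :
    Module.finrank k ↥(repSpan (S : Set (PP k d)) ⊓ repSpan S') + (d + 1) =
      S.card + S'.card := by
  have hdim := Submodule.finrank_sup_add_finrank_inf_eq (repSpan (S : Set (PP k d))) (repSpan S')
  rw [← repSpan_union,
    repSpan_eq_top_of_subset_rnc (by simpa using Set.union_subset hS hS') hunion, finrank_top,
    Module.finrank_fin_fun, finrank_repSpan (linearIndepOn_rep_of_subset_rnc hS hcS),
    finrank_repSpan (linearIndepOn_rep_of_subset_rnc hS' hcS')] at hdim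
  omega

lemma Projectivization.eq_of_rep_mem_of_finrank_eq_one {V : Type*} [AddCommGroup V] [Module k V]
    {W : Submodule k V} (hW : Module.finrank k W = 1) {p q : ℙ k V} (hp : p.rep ∈ W)
    (hq : q.rep ∈ W) : p = q := by
  have : FiniteDimensional k W := Module.finite_of_finrank_eq_succ hW
  have hsub : ∀ x : ℙ k V, x.rep ∈ W → x.submodule = W := fun x hx => by
    rw [submodule_eq]
    refine Submodule.eq_of_le_of_finrank_eq ((Submodule.span_singleton_le_iff_mem _ _).mpr hx) ?_
    rw [finrank_span_singleton x.rep_nonzero, hW]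
  exact submodule_injective ((hsub p hp).trans (hsub q hq).symm)

lemma lt_card_union_of_mem_rankSets_rnc {d : ℕ} [DecidableEq (PP k d)] {q : PP k d}
    {S S' : Finset (PP k d)} (hS : S ∈ rankSets (rnc (k := k) d) q)
    (hS' : S' ∈ rankSets (rnc (k := k) d) q) (hne : S ≠ S') : d + 1 < (S ∪ S').card := by
  obtain ⟨hSX, hcS, hqS⟩ := hS
  obtain ⟨hS'X, hcS', hqS'⟩ := hS'
  by_contra! hunion
  have hind := linearIndepOn_rep_of_subset_rnc (Finset.coe_union S S' ▸ Set.union_subset hSX hS'X)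
    hunion
  have hqI : q ∈ pspan (↑(S ∩ S') : Set (PP k d)) := by
    change q.rep ∈ repSpan _
    rw [← repSpan_inf_repSpan hind]
    exact ⟨hqS, hqS'⟩
  have hrk_le : xrank (rnc (k := k) d) q ≤ (S ∩ S').card :=
    Nat.sInf_le ⟨S ∩ S', (Finset.coe_subset.mpr Finset.inter_subset_left).trans hSX, rfl, hqI⟩
  have hlt : (S ∩ S').card < S.card := Finset.card_lt_card <|
    Finset.inter_subset_left.ssubset_of_ne fun h =>
      hne (Finset.eq_of_subset_of_card_le (h ▸ Finset.inter_subset_right) (by omega))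
  omega

theorem statement3_general {k : Type} [Field k] {d : ℕ}
    [DecidableEq (PP k d)] (hde : Even d)
    (q : PP k d) (hrk : xrank (rnc (k := k) d) q = d / 2 + 1)
    (S S' : Finset (PP k d)) (hS : ↑S ⊆ rnc (k := k) d) (hS' : ↑S' ⊆ rnc (k := k) d)
    (hcS : S.card = d / 2 + 1) (hcS' : S'.card = d / 2 + 1) (hne : S ≠ S')
    (hqS : q ∈ pspan (↑S : Set (PP k d))) (hqS' : q ∈ pspan (↑S' : Set (PP k d))) :
    pspan (↑S : Set (PP k d)) ∩ pspan (↑S' : Set (PP k d)) = {q} ∧ S ∩ S' = ∅ := by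
  have hd : d % 2 = 0 := Nat.even_iff.mp hde
  have hunion := lt_card_union_of_mem_rankSets_rnc ⟨hS, hcS.trans hrk.symm, hqS⟩
    ⟨hS', hcS'.trans hrk.symm, hqS'⟩ hne
  have hcard := Finset.card_union_add_card_inter S S'
  have hdisj : S ∩ S' = ∅ := Finset.card_eq_zero.mp (by omega)
  have hdim := finrank_repSpan_inf_add_of_subset_rnc hS hS' (by omega) (by omega) hunion.le
  have hqW : q.rep ∈ repSpan (S : Set (PP k d)) ⊓ repSpan S' := ⟨hqS, hqS'⟩
  refine ⟨Set.eq_singleton_iff_unique_mem.mpr ⟨hqW, fun p hp => ?_⟩, hdisj⟩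
  exact eq_of_rep_mem_of_finrank_eq_one (by omega) hp hqW

/-- on the rational normal curve of even degree `d`, for a point `q ∉ X`
of rank `d/2 + 1`, two distinct spanning sets of that cardinality satisfy
`⟨S⟩ ∩ ⟨S'⟩ = {q}` and `S ∩ S' = ∅`. -/
theorem statement3 {k : Type} [Field k] [IsAlgClosed k] {d : ℕ}
    [DecidableEq (PP k d)] (hd : 2 ≤ d) (hde : Even d)
    (q : PP k d) (hq : q ∉ rnc (k := k) d) (hrk : xrank (rnc (k := k) d) q = d / 2 + 1)
    (S S' : Finset (PP k d)) (hS : ↑S ⊆ rnc (k := k) d) (hS' : ↑S' ⊆ rnc (k := k) d)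
    (hcS : S.card = d / 2 + 1) (hcS' : S'.card = d / 2 + 1) (hne : S ≠ S')
    (hqS : q ∈ pspan (↑S : Set (PP k d))) (hqS' : q ∈ pspan (↑S' : Set (PP k d))) :
    pspan (↑S : Set (PP k d)) ∩ pspan (↑S' : Set (PP k d)) = {q} ∧ S ∩ S' = ∅ :=
  statement3_general hde q hrk S S' hS hS' hcS hcS' hne hqS hqS'
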